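/- If L ∈ ℝ^{n×n} is a (c_L,γ)-SED block matrix, then for every integer k ≥ 1 the power Lᵏ is (N^{k−1}·c_Lᵏ, γ)-SED. -/

import Mathlib

open Matrix

/-- Operator (induced l2) norm of a real matrix. -/
noncomputable def opNorm {α β : Type*} [Fintype α] [Fintype β] [DecidableEq β]
    (X : Matrix α β ℝ) : ℝ :=
  ‖LinearMap.toContinuousLinearMap (Matrix.toEuclideanLin X)‖

/-- Block `(l,j)` of a block-partitioned matrix. -/
def blk {N : ℕ} {n m : Fin N → ℕ}
    (X : Matrix ((l : Fin N) × Fin (n l)) ((j : Fin N) × Fin (m j)) ℝ)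
    (l j : Fin N) : Matrix (Fin (n l)) (Fin (m j)) ℝ :=
  fun a b => X ⟨l, a⟩ ⟨j, b⟩

/-- Block row of agent `i`. -/
def blkRow {N : ℕ} {n m : Fin N → ℕ}
    (K : Matrix ((l : Fin N) × Fin (m l)) ((j : Fin N) × Fin (n j)) ℝ)
    (i : Fin N) : Matrix (Fin (m i)) ((j : Fin N) × Fin (n j)) ℝ :=
  fun a b => K ⟨i, a⟩ b

/-- Zero-padded version of a diagonal block. -/
def pad {N : ℕ} {n : Fin N → ℕ} (i : Fin N) (M : Matrix (Fin (n i)) (Fin (n i)) ℝ) :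
    Matrix ((l : Fin N) × Fin (n l)) ((j : Fin N) × Fin (n j)) ℝ :=
  fun a b => if ha : a.1 = i then (if hb : b.1 = i then M (ha ▸ a.2) (hb ▸ b.2) else 0) else 0

/-- κ-truncation relative to agent `i`. -/
noncomputable def trunc {N : ℕ} {n m : Fin N → ℕ} (dist : Fin N → Fin N → ℝ) (i : Fin N) (κ : ℝ)
    (X : Matrix ((l : Fin N) × Fin (n l)) ((j : Fin N) × Fin (m j)) ℝ) :
    Matrix ((l : Fin N) × Fin (n l)) ((j : Fin N) × Fin (m j)) ℝ :=
  fun a b => if max (dist i a.1) (dist i b.1) < κ then X a b else 0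

/-- `X` is `(c,γ)`-spatially exponentially decaying. -/
def IsSED {N : ℕ} {n m : Fin N → ℕ} (dist : Fin N → Fin N → ℝ) (c γ : ℝ)
    (X : Matrix ((l : Fin N) × Fin (n l)) ((j : Fin N) × Fin (m j)) ℝ) : Prop :=
  ∀ l j : Fin N, opNorm (blk X l j) ≤ c * Real.exp (-γ * dist l j)

/-- `X` is `(c,γ)`-SED away from agent `i`. -/
def IsSEDAway {N : ℕ} {n m : Fin N → ℕ} (dist : Fin N → Fin N → ℝ) (i : Fin N) (c γ : ℝ)
    (X : Matrix ((l : Fin N) × Fin (n l)) ((j : Fin N) × Fin (m j)) ℝ) : Prop :=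
  ∀ l j : Fin N, opNorm (blk X l j) ≤ c * Real.exp (-γ * max (dist i l) (dist i j))

/-- `X` is `(τ,ρ)`-stable. -/
def IsStable {α : Type*} [Fintype α] [DecidableEq α] (τ ρ : ℝ) (X : Matrix α α ℝ) : Prop :=
  ∀ k : ℕ, opNorm (X ^ k) ≤ τ * Real.exp (-ρ * (k : ℝ))

/-! The `(l, j)` block of `A * B` is `∑ᵢ A_{li} B_{ij}`; bounding each term by
`a b e^{-γ (d(l,i) + d(i,j))} ≤ a b e^{-γ d(l,j)}` (triangle inequality, `γ ≥ 0`) shows that a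
product of an `(a, γ)`-SED and a `(b, γ)`-SED matrix is `(N a b, γ)`-SED. Induction on `k` gives
the bound for `Lᵏ`. -/

open scoped Matrix.Norms.L2Operator

lemma opNorm_eq_l2_opNorm {α β : Type*} [Fintype α] [Fintype β] [DecidableEq β]
    (X : Matrix α β ℝ) : opNorm X = ‖X‖ := rfl

lemma blk_mul {N : ℕ} {n m p : Fin N → ℕ}
    (A : Matrix ((l : Fin N) × Fin (n l)) ((j : Fin N) × Fin (m j)) ℝ)
    (B : Matrix ((l : Fin N) × Fin (m l)) ((j : Fin N) × Fin (p j)) ℝ) (l j : Fin N) :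
    blk (A * B) l j = ∑ i, blk A l i * blk B i j := by
  ext a b
  simp only [blk, mul_apply, Matrix.sum_apply, ← Finset.univ_sigma_univ, Finset.sum_sigma]

section IsSED

variable {N : ℕ} {n m p : Fin N → ℕ} {dist : Fin N → Fin N → ℝ} {a b γ : ℝ}

lemma IsSED.const_nonneg {X : Matrix ((l : Fin N) × Fin (n l)) ((j : Fin N) × Fin (m j)) ℝ}
    (hX : IsSED dist a γ X) (l : Fin N) : 0 ≤ a :=
  (mul_nonneg_iff_of_pos_right (Real.exp_pos _)).mp ((norm_nonneg _).trans (hX l l))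

lemma exp_neg_mul_add_le (hdist_tri : ∀ l j k, dist l j ≤ dist l k + dist k j) (hγ : 0 ≤ γ)
    (l i j : Fin N) :
    Real.exp (-γ * dist l i) * Real.exp (-γ * dist i j) ≤ Real.exp (-γ * dist l j) := by
  rw [← Real.exp_add, ← mul_add, neg_mul, neg_mul, Real.exp_le_exp, neg_le_neg_iff]
  exact mul_le_mul_of_nonneg_left (hdist_tri l j i) hγ

theorem IsSED.mul (hdist_tri : ∀ l j k, dist l j ≤ dist l k + dist k j) (hγ : 0 ≤ γ)
    {A : Matrix ((l : Fin N) × Fin (n l)) ((j : Fin N) × Fin (m j)) ℝ}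
    {B : Matrix ((l : Fin N) × Fin (m l)) ((j : Fin N) × Fin (p j)) ℝ}
    (hA : IsSED dist a γ A) (hB : IsSED dist b γ B) :
    IsSED dist (N * a * b) γ (A * B) := by
  intro l j
  have hab : 0 ≤ a * b := mul_nonneg (hA.const_nonneg l) (hB.const_nonneg j)
  have hterm (i : Fin N) : ‖blk A l i * blk B i j‖ ≤ a * b * Real.exp (-γ * dist l j) :=
    calc ‖blk A l i * blk B i j‖ ≤ ‖blk A l i‖ * ‖blk B i j‖ := l2_opNorm_mul _ _
      _ ≤ a * Real.exp (-γ * dist l i) * (b * Real.exp (-γ * dist i j)) :=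
        mul_le_mul (hA l i) (hB i j) (norm_nonneg _) ((norm_nonneg _).trans (hA l i))
      _ = a * b * (Real.exp (-γ * dist l i) * Real.exp (-γ * dist i j)) := by ring
      _ ≤ a * b * Real.exp (-γ * dist l j) :=
        mul_le_mul_of_nonneg_left (exp_neg_mul_add_le hdist_tri hγ l i j) hab
  calc opNorm (blk (A * B) l j) = ‖∑ i, blk A l i * blk B i j‖ := by
        rw [opNorm_eq_l2_opNorm, blk_mul]
    _ ≤ ∑ i, ‖blk A l i * blk B i j‖ := norm_sum_le _ _
    _ ≤ ∑ _i : Fin N, a * b * Real.exp (-γ * dist l j) := Finset.sum_le_sum fun i _ => hterm i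
    _ = N * a * b * Real.exp (-γ * dist l j) := by
        rw [Finset.sum_const, Finset.card_univ, Fintype.card_fin, nsmul_eq_mul]
        ring

end IsSED

theorem SED_pow_general
    {N : ℕ} (n : Fin N → ℕ) (dist : Fin N → Fin N → ℝ)
    (hdist_tri : ∀ l j k, dist l j ≤ dist l k + dist k j)
    (cL γ : ℝ) (hγ : 0 ≤ γ)
    (L : Matrix ((l : Fin N) × Fin (n l)) ((j : Fin N) × Fin (n j)) ℝ)
    (hL : IsSED dist cL γ L) (k : ℕ) (hk : 1 ≤ k) :
    IsSED dist ((N : ℝ) ^ (k - 1) * cL ^ k) γ (L ^ k) := by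
  obtain ⟨k, rfl⟩ := Nat.exists_eq_add_of_le' hk
  rw [Nat.add_sub_cancel]
  clear hk
  induction k with
  | zero => simpa using hL
  | succ k ih =>
    rw [pow_succ L (k + 1)]
    convert ih.mul hdist_tri hγ hL using 1
    ring

/-- powers of a `(c_L,γ)`-SED square block matrix: for `k ≥ 1`,
`Lᵏ` is `(N^{k−1} c_Lᵏ, γ)`-SED. -/
theorem SED_pow
    {N : ℕ} (n : Fin N → ℕ) (dist : Fin N → Fin N → ℝ)
    (hdist_nonneg : ∀ l j, 0 ≤ dist l j)
    (hdist_symm : ∀ l j, dist l j = dist j l)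
    (hdist_tri : ∀ l j k, dist l j ≤ dist l k + dist k j)
    (cL γ : ℝ) (hγ : 0 ≤ γ)
    (L : Matrix ((l : Fin N) × Fin (n l)) ((j : Fin N) × Fin (n j)) ℝ)
    (hL : IsSED dist cL γ L) (k : ℕ) (hk : 1 ≤ k) :
    IsSED dist ((N : ℝ) ^ (k - 1) * cL ^ k) γ (L ^ k) :=
  SED_pow_general n dist hdist_tri cL γ hγ L hL k hk
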